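/- arXiv:math/0510385 — 4 statements merged into one kernel-verified Lean document; each statement's English description precedes it below -/
import Mathlib

section
/- Let m, h be coprime positive integers, ν = (m/h, ..., m/h) ∈ ℚ^h, and let A be a normalized semi-module for m, h of type μ' = (μ'₁, ..., μ'_h). Then ν ⪯ μ', i.e., Σ_{i=1}^{i₀} μ'ᵢ ≤ i₀·m/h for all i₀ < h and Σ_{i=1}^{h} μ'ᵢ = m; moreover all μ'ᵢ are nonnegative. -/
/-- A semi-module for `m`, `h`: a nonempty subset of `ℤ`, bounded below,
closed under addition of `m` and of `h`. -/
def IsSemiModule (m h : ℤ) (A : Set ℤ) : Prop :=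
  A.Nonempty ∧ BddBelow A ∧ (∀ a ∈ A, a + m ∈ A) ∧ (∀ a ∈ A, a + h ∈ A)

/-- `B = A \ (h + A)`. -/
def BSet (h : ℤ) (A : Set ℤ) : Set ℤ := {a ∈ A | a - h ∉ A}

/-- A semi-module is normalized if the elements of `B = A \ (h+A)` sum to `h(h-1)/2`. -/
def IsNormalized (h : ℤ) (A : Set ℤ) : Prop :=
  ∃ s : Finset ℤ, ↑s = BSet h A ∧ ∑ a ∈ s, a = h * (h - 1) / 2

/-- `max {n : ℕ | a + m - n h ∈ A}`. -/
noncomputable def maxShift (m h : ℤ) (A : Set ℤ) (a : ℤ) : ℕ :=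
  sSup {n : ℕ | a + m - n * h ∈ A}

/-- The type of a normalized semi-module `A`:
`b 0 = min B`, and `b (i+1) = b i + m - μ' i · h` with `μ' i` the maximal
nonnegative integer such that `b (i+1) ∈ A`. -/
def HasType (m h : ℕ) (A : Set ℤ) (μ' : Fin h → ℕ) : Prop :=
  ∃ b : ℕ → ℤ,
    b 0 ∈ BSet h A ∧ (∀ x ∈ BSet h A, b 0 ≤ x) ∧
    ∀ i : Fin h,
      b (i + 1) = b i + m - μ' i * h ∧ b (i + 1) ∈ A ∧
        b i + m - (μ' i + 1) * h ∉ A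

/-- Partial sum of the first `i` entries of a vector in `ℕ^h`. -/
def psum {h : ℕ} (μ : Fin h → ℕ) (i : ℕ) : ℕ :=
  ∑ j : Fin h, if (j : ℕ) < i then μ j else 0

/-- Dominance order `ψ ⪯ χ` (with the paper's conventions, dominant vectors
are weakly increasing): all partial sums of `χ` are at most those of `ψ`,
with equal total sum. -/
def Dominates {h : ℕ} (ψ χ : Fin h → ℕ) : Prop :=
  (∀ i : ℕ, psum χ i ≤ psum ψ i) ∧ psum ψ h = psum χ h

/-- An extended semi-module `(A, φ)` for `μ`. -/
def IsExtSemiModule (m h : ℕ) (A : Set ℤ) (φ : ℤ → WithBot ℕ) (μ : Fin h → ℕ) : Prop :=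
  IsSemiModule m h A ∧ IsNormalized h A ∧
  (∀ a : ℤ, φ a = ⊥ ↔ a ∉ A) ∧
  (∀ a : ℤ, φ a + 1 ≤ φ (a + h)) ∧
  (∀ a ∈ A, φ a ≤ (maxShift m h A a : WithBot ℕ)) ∧
  (∀ a ∈ A, (∀ b : ℤ, a ≤ b → b ∈ A) → φ a = (maxShift m h A a : WithBot ℕ)) ∧
  ∃ seq : Fin h → ℕ → ℤ,
    (∀ l j, seq l j ∈ A) ∧
    (∀ a ∈ A, ∃! p : Fin h × ℕ, seq p.1 p.2 = a) ∧
    (∀ l j, φ (seq l (j + 1)) = φ (seq l j) + 1) ∧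
    (∀ l j, (φ (seq l j + h) = φ (seq l j) + 1 → seq l (j + 1) = seq l j + h) ∧
            (φ (seq l j + h) ≠ φ (seq l j) + 1 → seq l j + h < seq l (j + 1))) ∧
    ∃ σ : Equiv.Perm (Fin h), ∀ l, φ (seq l 0) = (μ (σ l) : WithBot ℕ)

/-- `(A, φ)` is cyclic: `φ a = max {n : a + m - n h ∈ A}` for all `a ∈ A`. -/
def IsCyclicExt (m h : ℕ) (A : Set ℤ) (φ : ℤ → WithBot ℕ) : Prop :=
  ∀ a ∈ A, φ a = (maxShift m h A a : WithBot ℕ)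

/-- The set `𝒱(A,φ) = {(a,b) ∈ A × A | b > a, φ a > φ b > φ (a - h)}`. -/
def Vset (h : ℕ) (A : Set ℤ) (φ : ℤ → WithBot ℕ) : Set (ℤ × ℤ) :=
  {p | p.1 ∈ A ∧ p.2 ∈ A ∧ p.1 < p.2 ∧ φ p.2 < φ p.1 ∧ φ (p.1 - h) < φ p.2}

/-- `d(b,μ) = Σ_{i=0}^{h-1} Σ_{j=1}^{i} (m/h - μ_j) - (h-1)/2`. -/
def dval (m h : ℕ) (μ : Fin h → ℕ) : ℚ :=
  (∑ i ∈ Finset.range h, ((i * m : ℚ) / h - psum μ i)) - (h - 1) / 2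

/-!
Along the type walk `b₀, b₁, …, b_h` every `bᵢ` with `i ≥ 1` lies in `B`, because `μ'ᵢ` is
maximal, and `bᵢ = b₀ + i·m - (μ'₁ + ⋯ + μ'ᵢ)·h`. Minimality of `b₀` in `B` gives the partial
sum bounds. For `i = h` it gives `Σ μ' ≤ m`, and the reverse inequality holds because
`b_h = b₀ + (m - Σ μ')·h` would otherwise be an `h`-translate of `b₀ ∈ A`, hence not in `B`.
-/

lemma add_nat_mul_mem {A : Set ℤ} {h : ℤ} (hAh : ∀ a ∈ A, a + h ∈ A) {a : ℤ} (ha : a ∈ A)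
    (n : ℕ) : a + n * h ∈ A := by
  induction n with
  | zero => simpa using ha
  | succ n ih => convert hAh _ ih using 1; push_cast; ring

lemma add_mul_notMem_BSet {A : Set ℤ} {h : ℤ} (hAh : ∀ a ∈ A, a + h ∈ A) {a : ℤ} (ha : a ∈ A)
    {k : ℤ} (hk : 0 < k) : a + k * h ∉ BSet h A := by
  rintro ⟨-, hnot⟩
  obtain ⟨n, rfl⟩ : ∃ n : ℕ, k = n + 1 := ⟨(k - 1).toNat, by omega⟩
  exact hnot (by convert add_nat_mul_mem hAh ha n using 1; ring)

def IsTypeSequence (m h : ℕ) (A : Set ℤ) (b : ℕ → ℤ) (μ' : ℕ → ℤ) : Prop :=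
  ∀ i < h, b (i + 1) = b i + m - μ' (i + 1) * h ∧ b (i + 1) ∈ A ∧
    (∀ n : ℤ, μ' (i + 1) < n → b i + m - n * h ∉ A)

namespace IsTypeSequence

variable {m h : ℕ} {A : Set ℤ} {b : ℕ → ℤ} {μ' : ℕ → ℤ}

lemma mem (hrec : IsTypeSequence m h A b μ') (hb0 : b 0 ∈ A) : ∀ i ≤ h, b i ∈ A
  | 0, _ => hb0
  | i + 1, hi => (hrec i hi).2.1

lemma mem_BSet (hrec : IsTypeSequence m h A b μ') {i : ℕ} (hi : i < h) :
    b (i + 1) ∈ BSet h A := by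
  obtain ⟨heq, hmem, hmax⟩ := hrec i hi
  refine ⟨hmem, ?_⟩
  have hsub : b (i + 1) - h = b i + m - (μ' (i + 1) + 1) * h := by rw [heq]; ring
  exact hsub ▸ hmax _ (lt_add_one _)

lemma nonneg (hrec : IsTypeSequence m h A b μ') (hAm : ∀ a ∈ A, a + m ∈ A) (hb0 : b 0 ∈ A)
    {i : ℕ} (hi : i < h) : 0 ≤ μ' (i + 1) := by
  by_contra! hneg
  have := (hrec i hi).2.2 0 hneg
  simp only [zero_mul, sub_zero] at this
  exact this (hAm _ (hrec.mem hb0 i hi.le))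

lemma eq_sum (hrec : IsTypeSequence m h A b μ') :
    ∀ i ≤ h, b i = b 0 + i * m - (∑ j ∈ Finset.range i, μ' (j + 1)) * h
  | 0, _ => by simp
  | i + 1, hi => by
    rw [Finset.sum_range_succ, (hrec i hi).1, hrec.eq_sum i (by omega)]
    push_cast
    ring

lemma mul_sum_le (hrec : IsTypeSequence m h A b μ') (hb0min : ∀ x ∈ BSet h A, b 0 ≤ x) :
    ∀ i ≤ h, (h : ℤ) * ∑ j ∈ Finset.range i, μ' (j + 1) ≤ i * m
  | 0, _ => by simp
  | i + 1, hi => by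
    have hle := hb0min _ (hrec.mem_BSet hi)
    rw [hrec.eq_sum _ hi] at hle
    push_cast at hle ⊢
    linarith

end IsTypeSequence

theorem type_dominated_by_nu_general (m h : ℕ) (hh : 0 < h)
    (A : Set ℤ) (hA : IsSemiModule m h A)
    (b : ℕ → ℤ) (μ' : ℕ → ℤ)
    (hb0 : b 0 ∈ BSet h A) (hb0min : ∀ x ∈ BSet h A, b 0 ≤ x)
    (hrec : ∀ i < h,
      b (i + 1) = b i + m - μ' (i + 1) * h ∧ b (i + 1) ∈ A ∧
        (∀ n : ℤ, μ' (i + 1) < n → b i + m - n * h ∉ A)) :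
    (∀ i₀ < h, (h : ℤ) * ∑ i ∈ Finset.range i₀, μ' (i + 1) ≤ i₀ * m) ∧
      (∑ i ∈ Finset.range h, μ' (i + 1)) = m ∧
      ∀ i < h, 0 ≤ μ' (i + 1) := by
  obtain ⟨-, -, hAm, hAh⟩ := hA
  have hseq : IsTypeSequence m h A b μ' := hrec
  refine ⟨fun i₀ hi₀ => hseq.mul_sum_le hb0min i₀ hi₀.le, ?_,
    fun i hi => hseq.nonneg hAm hb0.1 hi⟩
  set S := ∑ i ∈ Finset.range h, μ' (i + 1)
  have hS_le : S ≤ m :=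
    le_of_mul_le_mul_left (hseq.mul_sum_le hb0min h le_rfl) (by exact_mod_cast hh)
  have hbh : b h = b 0 + (m - S) * h := by rw [hseq.eq_sum h le_rfl]; ring
  have hBh : b h ∈ BSet h A := by
    obtain ⟨i, rfl⟩ := Nat.exists_eq_add_one_of_ne_zero hh.ne'
    exact hseq.mem_BSet (lt_add_one i)
  by_contra hne
  exact add_mul_notMem_BSet hAh hb0.1 (by omega : (0 : ℤ) < m - S) (hbh ▸ hBh)

/-- the type `μ'` of a normalized semi-module satisfies `ν ⪯ μ'`:
`Σ_{i=1}^{i₀} μ'ᵢ ≤ i₀ · m/h` for all `i₀ < h`, `Σ_{i=1}^{h} μ'ᵢ = m`,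
and all `μ'ᵢ` are nonnegative. -/
theorem type_dominated_by_nu (m h : ℕ) (hm : 0 < m) (hh : 0 < h)
    (hcop : Nat.Coprime m h) (A : Set ℤ) (hA : IsSemiModule m h A)
    (hnorm : IsNormalized h A) (b : ℕ → ℤ) (μ' : ℕ → ℤ)
    (hb0 : b 0 ∈ BSet h A) (hb0min : ∀ x ∈ BSet h A, b 0 ≤ x)
    (hrec : ∀ i < h,
      b (i + 1) = b i + m - μ' (i + 1) * h ∧ b (i + 1) ∈ A ∧
        (∀ n : ℤ, μ' (i + 1) < n → b i + m - n * h ∉ A)) :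
    (∀ i₀ < h, (h : ℤ) * ∑ i ∈ Finset.range i₀, μ' (i + 1) ≤ i₀ * m) ∧
      (∑ i ∈ Finset.range h, μ' (i + 1)) = m ∧
      ∀ i < h, 0 ≤ μ' (i + 1) :=
  type_dominated_by_nu_general m h hh A hA b μ' hb0 hb0min hrec
end

section
/- Let m, h be coprime positive integers. The map sending a normalized semi-module A for m, h to its type μ' is a bijection between the set of normalized semi-modules for m, h and the set of vectors μ' ∈ ℕ^h with ν ⪯ μ', where ν = (m/h, ..., m/h). -/
open Finset

section AddClosed

variable {h : ℤ} {A : Set ℤ}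

lemma add_mul_mem (hA : ∀ a ∈ A, a + h ∈ A) {a : ℤ} (ha : a ∈ A) (n : ℕ) : a + n * h ∈ A := by
  induction n with
  | zero => simpa using ha
  | succ n ih => convert hA _ ih using 1; push_cast; ring

lemma mem_of_modEq_of_le (hA : ∀ a ∈ A, a + h ∈ A) (hh : 0 < h) {a x : ℤ} (ha : a ∈ A)
    (hax : a ≡ x [ZMOD h]) (hle : a ≤ x) : x ∈ A := by
  obtain ⟨k, hk⟩ := hax.dvd
  lift k to ℕ using by nlinarith
  convert add_mul_mem hA ha k using 1
  linarith

lemma BSet.eq_of_modEq (hA : ∀ a ∈ A, a + h ∈ A) (hh : 0 < h) {x y : ℤ} (hx : x ∈ BSet h A)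
    (hy : y ∈ BSet h A) (hxy : x ≡ y [ZMOD h]) : x = y := by
  wlog hle : x ≤ y generalizing x y
  · exact (this hy hx hxy.symm (le_of_not_ge hle)).symm
  by_contra hne
  have : h ≤ y - x := Int.le_of_dvd (by omega) hxy.dvd
  exact hy.2 (mem_of_modEq_of_le hA hh hx.1 (Int.modEq_sub_modulus_iff.mpr hxy) (by linarith))

lemma exists_mem_bSet_modEq_le (hb : BddBelow A) (hh : 0 < h) {x : ℤ} (hx : x ∈ A) :
    ∃ b ∈ BSet h A, b ≡ x [ZMOD h] ∧ b ≤ x := by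
  obtain ⟨b, ⟨hbA, hbx⟩, hmin⟩ := Int.exists_least_of_bdd (P := fun z => z ∈ A ∧ z ≡ x [ZMOD h])
    (by obtain ⟨L, hL⟩ := hb; exact ⟨L, fun z hz => hL hz.1⟩) ⟨x, hx, .rfl⟩
  refine ⟨b, ⟨hbA, fun hb' => ?_⟩, hbx, hmin x ⟨hx, .rfl⟩⟩
  linarith [hmin _ ⟨hb', Int.sub_modulus_modEq_iff.mpr hbx⟩]

lemma mem_iff_exists_mem_bSet (hA : ∀ a ∈ A, a + h ∈ A) (hb : BddBelow A) (hh : 0 < h)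
    (x : ℤ) : x ∈ A ↔ ∃ b ∈ BSet h A, b ≡ x [ZMOD h] ∧ b ≤ x :=
  ⟨exists_mem_bSet_modEq_le hb hh, fun ⟨_, hb, hbx, hle⟩ => mem_of_modEq_of_le hA hh hb.1 hbx hle⟩

lemma eq_of_bSet_eq {A' : Set ℤ} (hA : ∀ a ∈ A, a + h ∈ A) (hA' : ∀ a ∈ A', a + h ∈ A')
    (hb : BddBelow A) (hb' : BddBelow A') (hh : 0 < h) (hB : BSet h A = BSet h A') : A = A' := by
  ext x
  rw [mem_iff_exists_mem_bSet hA hb hh, mem_iff_exists_mem_bSet hA' hb' hh, hB]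

end AddClosed

section MaxShift

variable {m h : ℤ} {A : Set ℤ} {a : ℤ}

lemma bddAbove_shifts (hb : BddBelow A) (hh : 0 < h) (a : ℤ) :
    BddAbove {n : ℕ | a + m - n * h ∈ A} := by
  obtain ⟨L, hL⟩ := hb
  refine ⟨(a + m - L).toNat, fun n hn => ?_⟩
  have : L ≤ a + m - n * h := hL hn
  have : (n : ℤ) ≤ n * h := le_mul_of_one_le_right (by positivity) hh
  omega

lemma maxShift_spec (hb : BddBelow A) (hh : 0 < h) (ha : a + m ∈ A) :
    a + m - maxShift m h A a * h ∈ A ∧ a + m - (maxShift m h A a + 1) * h ∉ A := by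
  have hne : {n : ℕ | a + m - n * h ∈ A}.Nonempty := ⟨0, by simpa using ha⟩
  refine ⟨Nat.sSup_mem hne (bddAbove_shifts hb hh a), fun hmem => ?_⟩
  have := le_csSup (bddAbove_shifts hb hh a) (a := maxShift m h A a + 1) (by simpa using hmem)
  exact (maxShift m h A a).lt_succ_self.not_ge this

lemma maxShift_eq (hb : BddBelow A) (hA : ∀ a ∈ A, a + h ∈ A) (hh : 0 < h) {n : ℕ}
    (hn : a + m - n * h ∈ A) (hn1 : a + m - (n + 1) * h ∉ A) : maxShift m h A a = n := by
  refine le_antisymm (csSup_le ⟨n, hn⟩ fun k hk => ?_) (le_csSup (bddAbove_shifts hb hh a) hn)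
  by_contra! hnk
  refine hn1 (mem_of_modEq_of_le hA hh hk ?_ ?_)
  · exact Int.modEq_iff_dvd.mpr ⟨k - (n + 1), by ring⟩
  · have : ((n : ℤ) + 1) * h ≤ k * h := by gcongr; exact_mod_cast hnk
    linarith

end MaxShift

lemma psum_zero {h : ℕ} (μ : Fin h → ℕ) : psum μ 0 = 0 := by simp [psum]

lemma psum_succ {h : ℕ} (μ : Fin h → ℕ) {i : ℕ} (hi : i < h) :
    psum μ (i + 1) = psum μ i + μ ⟨i, hi⟩ := by
  have split (j : Fin h) : (if (j : ℕ) < i + 1 then μ j else 0) =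
      (if (j : ℕ) < i then μ j else 0) + if j = ⟨i, hi⟩ then μ j else 0 := by
    split_ifs with h₁ h₂ h₃ <;> simp only [Fin.ext_iff] at * <;> omega
  simp only [psum, split, sum_add_distrib, sum_ite_eq', mem_univ, if_true]

/-- A witness `b` of `HasType m h A μ`. -/
def IsTypeSeq (m h : ℕ) (A : Set ℤ) (μ : Fin h → ℕ) (b : ℕ → ℤ) : Prop :=
  b 0 ∈ BSet h A ∧ (∀ x ∈ BSet h A, b 0 ≤ x) ∧
    ∀ i : Fin h, b (i + 1) = b i + m - μ i * h ∧ b (i + 1) ∈ A ∧ b i + m - (μ i + 1) * h ∉ A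

namespace IsTypeSeq

variable {m h : ℕ} {A : Set ℤ} {μ : Fin h → ℕ} {b : ℕ → ℤ}

lemma eq_maxShift (hA : IsSemiModule m h A) (hh : 0 < h) (hb : IsTypeSeq m h A μ b)
    (i : Fin h) : μ i = maxShift m h A (b i) := by
  obtain ⟨hstep, hmem, hnot⟩ := hb.2.2 i
  exact (maxShift_eq hA.2.1 hA.2.2.2 (by exact_mod_cast hh) (hstep ▸ hmem) hnot).symm

lemma unique (hA : IsSemiModule m h A) (hh : 0 < h) {μ' : Fin h → ℕ} {b' : ℕ → ℤ}
    (hb : IsTypeSeq m h A μ b) (hb' : IsTypeSeq m h A μ' b') : μ = μ' := by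
  have hb_eq : ∀ i ≤ h, b i = b' i := by
    intro i
    induction i with
    | zero => exact fun _ => le_antisymm (hb.2.1 _ hb'.1) (hb'.2.1 _ hb.1)
    | succ i ih =>
      intro hi
      rw [(hb.2.2 ⟨i, hi⟩).1, (hb'.2.2 ⟨i, hi⟩).1, hb.eq_maxShift hA hh, hb'.eq_maxShift hA hh,
        ih (by omega)]
  funext i
  rw [hb.eq_maxShift hA hh, hb'.eq_maxShift hA hh, hb_eq i i.2.le]

end IsTypeSeq

lemma exists_isTypeSeq {m h : ℕ} {A : Set ℤ} (hA : IsSemiModule m h A) (hh : 0 < h) :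
    ∃ μ b, IsTypeSeq m h A μ b := by
  obtain ⟨hne, hbdd, hclm, -⟩ := hA
  have hh' : (0 : ℤ) < h := by exact_mod_cast hh
  obtain ⟨a₀, ha₀, hmin⟩ := Int.exists_least_of_bdd
    (by obtain ⟨L, hL⟩ := hbdd; exact ⟨L, fun z hz => hL hz⟩) hne
  let b : ℕ → ℤ := fun n => Nat.rec a₀ (fun _ x => x + m - maxShift m h A x * h) n
  have hbA : ∀ i, b i ∈ A := by
    intro i
    induction i with
    | zero => exact ha₀
    | succ i ih => exact (maxShift_spec hbdd hh' (hclm _ ih)).1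
  refine ⟨fun i => maxShift m h A (b i), b, ⟨ha₀, fun hc => ?_⟩, fun x hx => hmin x hx.1,
    fun i => ⟨rfl, hbA (i + 1), (maxShift_spec hbdd hh' (hclm _ (hbA i))).2⟩⟩
  linarith [hmin (a₀ - h) hc]

lemma existsUnique_hasType {m h : ℕ} {A : Set ℤ} (hA : IsSemiModule m h A) (hh : 0 < h) :
    ∃! μ, HasType m h A μ := by
  obtain ⟨μ, b, hb⟩ := exists_isTypeSeq hA hh
  exact ⟨μ, ⟨b, hb⟩, fun μ' ⟨b', hb'⟩ => (hb.unique hA hh hb').symm⟩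

section Coprime

variable {m h : ℕ}

lemma eq_of_mul_modEq_mul (hcop : m.Coprime h) {i j : ℕ} (hi : i < h) (hj : j < h)
    (hij : (i : ℤ) * m ≡ j * m [ZMOD h]) : i = j := by
  have : i * m ≡ j * m [MOD h] := Int.natCast_modEq_iff.mp (by exact_mod_cast hij)
  exact (Nat.ModEq.cancel_right_of_coprime hcop.symm this).eq_of_lt_of_lt hi hj

lemma exists_lt_mul_modEq (hh : 0 < h) (hcop : m.Coprime h) (x : ℤ) :
    ∃ j < h, (j : ℤ) * m ≡ x [ZMOD h] := by
  have : NeZero h := ⟨hh.ne'⟩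
  refine ⟨((x : ZMod h) * (m : ZMod h)⁻¹).val, ZMod.val_lt _, ?_⟩
  rw [← ZMod.intCast_eq_intCast_iff]
  push_cast
  rw [ZMod.natCast_zmod_val, mul_assoc, mul_comm _ (m : ZMod h), ZMod.coe_mul_inv_eq_one m hcop,
    mul_one]

end Coprime

def typeSeq (m h : ℕ) (μ : Fin h → ℕ) (b₀ : ℤ) (i : ℕ) : ℤ := b₀ + i * m - h * psum μ i

section TypeSeq

variable {m h : ℕ} {μ : Fin h → ℕ} {b₀ : ℤ}

lemma typeSeq_zero : typeSeq m h μ b₀ 0 = b₀ := by simp [typeSeq, psum_zero]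

lemma typeSeq_succ {i : ℕ} (hi : i < h) :
    typeSeq m h μ b₀ (i + 1) = typeSeq m h μ b₀ i + m - μ ⟨i, hi⟩ * h := by
  simp only [typeSeq, psum_succ μ hi]; push_cast; ring

lemma typeSeq_modEq (i : ℕ) : typeSeq m h μ b₀ i ≡ b₀ + i * m [ZMOD h] :=
  Int.modEq_iff_dvd.mpr ⟨psum μ i, by simp only [typeSeq]; ring⟩

lemma sum_typeSeq :
    ∑ i ∈ range h, typeSeq m h μ b₀ i = h * b₀ + ∑ i ∈ range h, typeSeq m h μ 0 i := by
  simp only [typeSeq, sum_sub_distrib, sum_add_distrib, sum_const, card_range, nsmul_eq_mul]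
  ring

end TypeSeq

namespace IsTypeSeq

variable {m h : ℕ} {A : Set ℤ} {μ : Fin h → ℕ} {b : ℕ → ℤ}

lemma eq_typeSeq (hb : IsTypeSeq m h A μ b) : ∀ i ≤ h, b i = typeSeq m h μ (b 0) i := by
  intro i
  induction i with
  | zero => simp [typeSeq_zero]
  | succ i ih =>
    intro hi
    rw [(hb.2.2 ⟨i, hi⟩).1, typeSeq_succ hi, ← ih (by omega)]

lemma mem_bSet (hb : IsTypeSeq m h A μ b) : ∀ i ≤ h, b i ∈ BSet h A
  | 0, _ => hb.1
  | i + 1, hi => by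
    obtain ⟨hstep, hmem, hnot⟩ := hb.2.2 ⟨i, hi⟩
    refine ⟨hmem, fun hc => hnot ?_⟩
    convert hc using 1
    simp only [hstep]; ring

lemma modEq (hb : IsTypeSeq m h A μ b) {i : ℕ} (hi : i ≤ h) : b i ≡ b 0 + i * m [ZMOD h] :=
  hb.eq_typeSeq i hi ▸ typeSeq_modEq i

lemma injOn (hcop : m.Coprime h) (hb : IsTypeSeq m h A μ b) : Set.InjOn b (Set.Iio h) := by
  intro i hi j hj hij
  have hbi := hb.modEq (le_of_lt hi)
  rw [hij] at hbi
  exact eq_of_mul_modEq_mul hcop hi hj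
    (Int.ModEq.add_left_cancel' (b 0) (hbi.symm.trans (hb.modEq (le_of_lt hj))))

lemma bSet_eq (hA : ∀ a ∈ A, a + h ∈ A) (hh : 0 < h) (hcop : m.Coprime h)
    (hb : IsTypeSeq m h A μ b) : BSet h A = b '' Set.Iio h := by
  refine Set.Subset.antisymm (fun x hx => ?_) ?_
  · obtain ⟨j, hj, hjx⟩ := exists_lt_mul_modEq hh hcop (x - b 0)
    refine ⟨j, hj, BSet.eq_of_modEq hA (by exact_mod_cast hh) (hb.mem_bSet j hj.le) hx ?_⟩
    refine (hb.modEq hj.le).trans ?_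
    simpa using hjx.add_left (b 0)
  · rintro _ ⟨j, hj, rfl⟩
    exact hb.mem_bSet j (le_of_lt hj)

lemma isNormalized_iff (hA : ∀ a ∈ A, a + h ∈ A) (hh : 0 < h) (hcop : m.Coprime h)
    (hb : IsTypeSeq m h A μ b) :
    IsNormalized h A ↔ ∑ i ∈ range h, b i = h * (h - 1) / 2 := by
  have hB : BSet h A = ↑((range h).image b) := by
    rw [hb.bSet_eq hA hh hcop, coe_image, coe_range]
  simp only [IsNormalized, hB, coe_inj, exists_eq_left]
  rw [sum_image (by simpa using hb.injOn hcop)]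

variable {A' : Set ℤ} {b' : ℕ → ℤ}

lemma sum_eq (hb : IsTypeSeq m h A μ b) :
    ∑ i ∈ range h, b i = h * b 0 + ∑ i ∈ range h, typeSeq m h μ 0 i := by
  rw [← sum_typeSeq]
  exact sum_congr rfl fun i hi => hb.eq_typeSeq i (mem_range.mp hi).le

lemma eq_of_isNormalized (hh : 0 < h) (hcop : m.Coprime h) (hA : IsSemiModule m h A)
    (hA' : IsSemiModule m h A') (hN : IsNormalized h A) (hN' : IsNormalized h A')
    (hb : IsTypeSeq m h A μ b) (hb' : IsTypeSeq m h A' μ b') : A = A' := by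
  have hh' : (0 : ℤ) < h := by exact_mod_cast hh
  have hsum := hb.sum_eq ▸ (hb.isNormalized_iff hA.2.2.2 hh hcop).mp hN
  have hsum' := hb'.sum_eq ▸ (hb'.isNormalized_iff hA'.2.2.2 hh hcop).mp hN'
  have h0 : b 0 = b' 0 := mul_left_cancel₀ hh'.ne' (by linarith)
  refine eq_of_bSet_eq hA.2.2.2 hA'.2.2.2 hA.2.1 hA'.2.1 hh' ?_
  rw [hb.bSet_eq hA.2.2.2 hh hcop, hb'.bSet_eq hA'.2.2.2 hh hcop]
  refine Set.image_congr fun i hi => ?_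
  rw [hb.eq_typeSeq i (le_of_lt hi), hb'.eq_typeSeq i (le_of_lt hi), h0]

end IsTypeSeq

def shiftClosure (h : ℕ) (b : ℕ → ℤ) : Set ℤ := {x | ∃ i < h, b i ≡ x [ZMOD h] ∧ b i ≤ x}

section ShiftClosure

variable {m h : ℕ} {μ : Fin h → ℕ} {b : ℕ → ℤ}

lemma le_of_mem_shiftClosure (hmin : ∀ i < h, b 0 ≤ b i) {x : ℤ} (hx : x ∈ shiftClosure h b) :
    b 0 ≤ x := by
  obtain ⟨i, hi, -, hle⟩ := hx
  exact (hmin i hi).trans hle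

lemma exists_lt_eq_succ (hper : b h = b 0) {i : ℕ} (hi : i < h) : ∃ j < h, b (i + 1) = b j := by
  rcases (Nat.succ_le_of_lt hi).eq_or_lt with he | hlt
  · exact ⟨0, by omega, by rw [← hper, ← he]⟩
  · exact ⟨i + 1, hlt, rfl⟩

lemma isSemiModule_shiftClosure (hh : 0 < h) (hmin : ∀ i < h, b 0 ≤ b i) (hper : b h = b 0)
    (hstep : ∀ i : Fin h, b (i + 1) = b i + m - μ i * h) :
    IsSemiModule m h (shiftClosure h b) := by
  refine ⟨⟨b 0, 0, hh, .rfl, le_rfl⟩, ⟨b 0, fun x hx => le_of_mem_shiftClosure hmin hx⟩, ?_, ?_⟩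
  · rintro x ⟨i, hi, hix, hle⟩
    obtain ⟨j, hj, hbj⟩ := exists_lt_eq_succ hper hi
    have hstep' : b j = b i + m - μ ⟨i, hi⟩ * h := hbj ▸ hstep ⟨i, hi⟩
    refine ⟨j, hj, ?_, ?_⟩
    · rw [hstep', mul_comm]
      exact Int.sub_modulus_mul_modEq_iff.mpr (hix.add_right _)
    · rw [hstep']
      nlinarith
  · rintro x ⟨i, hi, hix, hle⟩
    exact ⟨i, hi, Int.modEq_add_modulus_iff.mpr hix, by linarith⟩

lemma isTypeSeq_shiftClosure (hh : 0 < h) (hmin : ∀ i < h, b 0 ≤ b i) (hper : b h = b 0)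
    (hstep : ∀ i : Fin h, b (i + 1) = b i + m - μ i * h)
    (hinj : ∀ i < h, ∀ j < h, b i ≡ b j [ZMOD h] → i = j) :
    IsTypeSeq m h (shiftClosure h b) μ b := by
  refine ⟨⟨⟨0, hh, .rfl, le_rfl⟩, fun hc => ?_⟩, fun x hx => le_of_mem_shiftClosure hmin hx.1,
    fun i => ?_⟩
  · linarith [le_of_mem_shiftClosure hmin hc, (by exact_mod_cast hh : (0 : ℤ) < h)]
  obtain ⟨j, hj, hbj⟩ := exists_lt_eq_succ hper i.2
  refine ⟨hstep i, hbj ▸ ⟨j, hj, .rfl, le_rfl⟩, ?_⟩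
  rintro ⟨k, hk, hkx, hle⟩
  have e : b i + m - (μ i + 1) * h = b j - h := by rw [← hbj, hstep i]; ring
  rw [e] at hkx hle
  obtain rfl := hinj k hk j hj (Int.modEq_sub_modulus_iff.mp hkx)
  linarith [(by exact_mod_cast hh : (0 : ℤ) < h)]

end ShiftClosure

lemma sum_range_intCast (n : ℕ) : ∑ i ∈ range n, (i : ℤ) = n * (n - 1) / 2 := by
  have h2 : (∑ i ∈ range n, (i : ℤ)) * 2 = n * (n - 1) := by
    induction n with
    | zero => simp
    | succ n ih => rw [sum_range_succ, add_mul, ih]; push_cast; ring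
  omega

lemma dvd_choose_two_mul_sub_one {m h : ℕ} (hcop : m.Coprime h) :
    (h : ℤ) ∣ h * (h - 1) / 2 * (m - 1) := by
  obtain ⟨k, hk⟩ : (2 : ℤ) ∣ (h - 1) * (m - 1) := by
    rcases Nat.even_or_odd h with he | ho
    · have hm : Odd m := (Nat.Coprime.coprime_dvd_right he.two_dvd hcop).odd_of_right
      exact ((hm.natCast (R := ℤ)).sub_odd odd_one).two_dvd.mul_left _
    · exact ((ho.natCast (R := ℤ)).sub_odd odd_one).two_dvd.mul_right _
  have e : (h : ℤ) * (h - 1) / 2 * 2 = h * (h - 1) :=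
    Int.ediv_mul_cancel (Int.even_mul_pred_self _).two_dvd
  refine ⟨k, mul_right_cancel₀ (two_ne_zero (α := ℤ)) ?_⟩
  linear_combination ((m : ℤ) - 1) * e + (h : ℤ) * hk

lemma exists_sum_typeSeq_eq {m h : ℕ} (hcop : m.Coprime h) (μ : Fin h → ℕ) :
    ∃ b₀, ∑ i ∈ range h, typeSeq m h μ b₀ i = h * (h - 1) / 2 := by
  have hsum : ∑ i ∈ range h, typeSeq m h μ 0 i =
      h * (h - 1) / 2 * m - h * ∑ i ∈ range h, (psum μ i : ℤ) := by
    simp only [typeSeq, zero_add, sum_sub_distrib, ← sum_mul, ← mul_sum, sum_range_intCast]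
  obtain ⟨b₀, hb₀⟩ : (h : ℤ) ∣ h * (h - 1) / 2 - ∑ i ∈ range h, typeSeq m h μ 0 i := by
    rw [hsum, show ∀ c s : ℤ, c - (c * m - h * s) = -(c * (m - 1)) + h * s by intros; ring]
    exact (dvd_neg.mpr (dvd_choose_two_mul_sub_one hcop)).add (dvd_mul_right _ _)
  exact ⟨b₀, by rw [sum_typeSeq]; linarith⟩

lemma exists_isNormalized_hasType {m h : ℕ} (hh : 0 < h) (hcop : m.Coprime h) {μ : Fin h → ℕ}
    (hdom : ∀ i < h, (h : ℤ) * psum μ i ≤ i * m) (hsum : psum μ h = m) :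
    ∃ A, IsSemiModule m h A ∧ IsNormalized h A ∧ HasType m h A μ := by
  obtain ⟨b₀, hb₀⟩ := exists_sum_typeSeq_eq hcop μ
  have hmin : ∀ i < h, typeSeq m h μ b₀ 0 ≤ typeSeq m h μ b₀ i := fun i hi => by
    simp only [typeSeq, psum_zero, Nat.cast_zero]; linarith [hdom i hi]
  have hper : typeSeq m h μ b₀ h = typeSeq m h μ b₀ 0 := by
    simp only [typeSeq, psum_zero, hsum]; ring
  have hinj : ∀ i < h, ∀ j < h, typeSeq m h μ b₀ i ≡ typeSeq m h μ b₀ j [ZMOD h] → i = j :=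
    fun i hi j hj hij => eq_of_mul_modEq_mul hcop hi hj <| Int.ModEq.add_left_cancel' b₀ <|
      (typeSeq_modEq i).symm.trans (hij.trans (typeSeq_modEq j))
  have hS := isSemiModule_shiftClosure hh hmin hper fun i => typeSeq_succ i.2
  have hT := isTypeSeq_shiftClosure hh hmin hper (fun i => typeSeq_succ i.2) hinj
  exact ⟨_, hS, (hT.isNormalized_iff hS.2.2.2 hh hcop).mpr hb₀, _, hT⟩

theorem type_bijection_general (m h : ℕ) (hh : 0 < h)
    (hcop : Nat.Coprime m h) :
    (∀ A : Set ℤ, IsSemiModule m h A → IsNormalized h A →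
      ∃! μ' : Fin h → ℕ, HasType m h A μ') ∧
    ∀ μ' : Fin h → ℕ,
      ((∀ i < h, (h : ℤ) * psum μ' i ≤ i * m) ∧ psum μ' h = m) →
      ∃! A : Set ℤ, IsSemiModule m h A ∧ IsNormalized h A ∧ HasType m h A μ' := by
  refine ⟨fun A hA _ => existsUnique_hasType hA hh, fun μ ⟨hdom, hsum⟩ => ?_⟩
  obtain ⟨A, hA, hN, b, hb⟩ := exists_isNormalized_hasType hh hcop hdom hsum
  refine ⟨A, ⟨hA, hN, b, hb⟩, fun A' ⟨hA', hN', b', hb'⟩ => ?_⟩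
  exact (IsTypeSeq.eq_of_isNormalized hh hcop hA hA' hN hN' hb hb').symm

/-- mapping a normalized semi-module to its type is a bijection
onto the set of `μ' ∈ ℕ^h` with `ν ⪯ μ'`. -/
theorem type_bijection (m h : ℕ) (hm : 0 < m) (hh : 0 < h)
    (hcop : Nat.Coprime m h) :
    (∀ A : Set ℤ, IsSemiModule m h A → IsNormalized h A →
      ∃! μ' : Fin h → ℕ, HasType m h A μ') ∧
    ∀ μ' : Fin h → ℕ,
      ((∀ i < h, (h : ℤ) * psum μ' i ≤ i * m) ∧ psum μ' h = m) →
      ∃! A : Set ℤ, IsSemiModule m h A ∧ IsNormalized h A ∧ HasType m h A μ' :=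
  type_bijection_general m h hh hcop
end

section
/- For each dominant μ ∈ ℕ^h with Σμᵢ = m and gcd(m,h) = 1, there are only finitely many extended semi-modules (A, φ) for μ. -/
/-
The set `B = A \ (h + A)` consists of the minima of `A` in their residue classes mod `h`. Since `m`
is invertible mod `h`, from any `b ∈ B` one reaches every residue class by adding `j m` with
`j < h`; so any two elements of `B` differ by at most `(h - 1) m`, and `A` contains every
`x ≥ a + (h - 1) m` for `a ∈ A`. As `B` sums to `h (h - 1) / 2 ≥ 0`, it has an element `≥ 0` and
one `≤ h (h - 1) / 2`; hence `A ⊆ [-(h - 1) m, ∞)` and `[h (h - 1) / 2 + (h - 1) m, ∞) ⊆ A`.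
Above that window `φ = maxShift` is forced, below it `φ = ⊥`, and inside it `φ ≤ maxShift` is
bounded, so `(A, φ)` is determined by finitely many values in a finite range.
-/

open Set

lemma add_natCast_mul_mem {A : Set ℤ} {d a : ℤ} (hA : ∀ x ∈ A, x + d ∈ A) (ha : a ∈ A) :
    ∀ k : ℕ, a + k * d ∈ A
  | 0 => by simpa using ha
  | k + 1 => by
    convert hA _ (add_natCast_mul_mem hA ha k) using 1
    push_cast
    ring

lemma Int.exists_add_natCast_mul_modEq {m h : ℤ} (hh : 0 < h) (hcop : IsCoprime m h) (x y : ℤ) :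
    ∃ j : ℕ, (j : ℤ) < h ∧ x + j * m ≡ y [ZMOD h] := by
  obtain ⟨u, v, huv⟩ := hcop
  have hj : 0 ≤ (y - x) * u % h := Int.emod_nonneg _ hh.ne'
  refine ⟨((y - x) * u % h).toNat, ?_, ?_⟩
  · rw [Int.toNat_of_nonneg hj]
    exact Int.emod_lt_of_pos _ hh
  · rw [Int.toNat_of_nonneg hj]
    calc x + (y - x) * u % h * m ≡ x + (y - x) * u * m [ZMOD h] := by
          gcongr; exact Int.mod_modEq _ _
      _ = y + (x - y) * v * h := by linear_combination (y - x) * huv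
      _ ≡ y [ZMOD h] := by simp [Int.ModEq]

section OrderedMonoid

variable {M : Type*} [AddCommMonoid M] [LinearOrder M] [IsOrderedCancelAddMonoid M]

lemma Finset.exists_nonneg_of_sum_nonneg {s : Finset M} (hs : s.Nonempty)
    (h0 : 0 ≤ ∑ x ∈ s, x) : ∃ x ∈ s, 0 ≤ x := by
  simpa using Finset.exists_le_of_sum_le hs (f := 0) (g := id) (by simpa using h0)

lemma Finset.exists_le_sum_of_sum_nonneg {s : Finset M} (hs : s.Nonempty)
    (h0 : 0 ≤ ∑ x ∈ s, x) : ∃ x ∈ s, x ≤ ∑ x ∈ s, x := by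
  by_contra! hgt
  obtain ⟨x, hx⟩ := hs
  exact (hgt x hx).not_ge (Finset.single_le_sum (fun y hy => h0.trans (hgt y hy).le) hx)

end OrderedMonoid

section SemiModule

variable {m h : ℤ} {A : Set ℤ}

lemma le_of_mem_BSet_of_modEq (hh : 0 < h) (hA : ∀ x ∈ A, x + h ∈ A) {a b : ℤ}
    (hb : b ∈ BSet h A) (ha : a ∈ A) (hab : b ≡ a [ZMOD h]) : b ≤ a := by
  by_contra! hlt
  obtain ⟨c, hc⟩ := hab.symm.dvd
  have hc1 : 1 ≤ c := by nlinarith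
  have hbh : b - h = a + ((c - 1).toNat : ℤ) * h := by
    rw [Int.toNat_of_nonneg (by omega)]
    linear_combination hc
  exact hb.2 (hbh ▸ add_natCast_mul_mem hA ha _)

lemma exists_mem_BSet_le (hh : 0 < h) (hbdd : BddBelow A) {a : ℤ} (ha : a ∈ A) :
    ∃ b ∈ BSet h A, b ≤ a := by
  obtain ⟨L, hL⟩ := hbdd
  obtain ⟨b, ⟨hbA, hba⟩, hmin⟩ := Int.exists_least_of_bdd
    (P := fun z => z ∈ A ∧ z ≡ a [ZMOD h]) ⟨L, fun z hz => hL hz.1⟩ ⟨a, ha, rfl⟩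
  refine ⟨b, ⟨hbA, fun hbh => ?_⟩, hmin a ⟨ha, rfl⟩⟩
  have := hmin (b - h) ⟨hbh, Int.sub_modulus_modEq_iff.mpr hba⟩
  omega

namespace IsSemiModule

lemma mem_of_add_le (hA : IsSemiModule m h A) (hm : 0 ≤ m) (hh : 0 < h) (hcop : IsCoprime m h)
    {a x : ℤ} (ha : a ∈ A) (hx : a + (h - 1) * m ≤ x) : x ∈ A := by
  obtain ⟨j, hj, hjx⟩ := Int.exists_add_natCast_mul_modEq hh hcop a x
  obtain ⟨c, hc⟩ := hjx.dvd
  have hc0 : 0 ≤ c := by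
    have : 0 ≤ (h - 1 - j) * m := mul_nonneg (by omega) hm
    nlinarith
  have hxc : x = a + j * m + (c.toNat : ℤ) * h := by
    rw [Int.toNat_of_nonneg hc0]
    linear_combination hc
  rw [hxc]
  exact add_natCast_mul_mem hA.2.2.2 (add_natCast_mul_mem hA.2.2.1 ha j) _

lemma le_add_of_mem_BSet (hA : IsSemiModule m h A) (hm : 0 ≤ m) (hh : 0 < h)
    (hcop : IsCoprime m h) {b b' : ℤ} (hb : b ∈ BSet h A) (hb' : b' ∈ BSet h A) :
    b' ≤ b + (h - 1) * m := by
  obtain ⟨j, hj, hjb⟩ := Int.exists_add_natCast_mul_modEq hh hcop b b'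
  have := le_of_mem_BSet_of_modEq hh hA.2.2.2 hb' (add_natCast_mul_mem hA.2.2.1 hb.1 j) hjb.symm
  have : (j : ℤ) * m ≤ (h - 1) * m := mul_le_mul_of_nonneg_right (by omega) hm
  linarith

lemma exists_mem_BSet_nonneg_and_le (hA : IsSemiModule m h A) (hh : 0 < h)
    (hN : IsNormalized h A) :
    (∃ b ∈ BSet h A, 0 ≤ b) ∧ ∃ b ∈ BSet h A, b ≤ h * (h - 1) / 2 := by
  obtain ⟨s, hs, hsum⟩ := hN
  obtain ⟨a, ha⟩ := hA.1
  obtain ⟨b, hb, -⟩ := exists_mem_BSet_le hh hA.2.1 ha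
  have hne : s.Nonempty := ⟨b, by rwa [← Finset.mem_coe, hs]⟩
  have h0 : 0 ≤ ∑ x ∈ s, x := hsum ▸ Int.ediv_nonneg (by nlinarith) (by norm_num)
  simp only [← hs, Finset.mem_coe, ← hsum]
  exact ⟨Finset.exists_nonneg_of_sum_nonneg hne h0, Finset.exists_le_sum_of_sum_nonneg hne h0⟩

lemma le_of_mem (hA : IsSemiModule m h A) (hm : 0 ≤ m) (hh : 0 < h) (hcop : IsCoprime m h)
    (hN : IsNormalized h A) {a : ℤ} (ha : a ∈ A) : -((h - 1) * m) ≤ a := by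
  obtain ⟨b, hb, hba⟩ := exists_mem_BSet_le hh hA.2.1 ha
  obtain ⟨⟨b₀, hb₀, hb₀_nonneg⟩, -⟩ := hA.exists_mem_BSet_nonneg_and_le hh hN
  have := hA.le_add_of_mem_BSet hm hh hcop hb hb₀
  linarith

lemma mem_of_le (hA : IsSemiModule m h A) (hm : 0 ≤ m) (hh : 0 < h) (hcop : IsCoprime m h)
    (hN : IsNormalized h A) {x : ℤ} (hx : h * (h - 1) / 2 + (h - 1) * m ≤ x) : x ∈ A := by
  obtain ⟨-, b, hb, hbN⟩ := hA.exists_mem_BSet_nonneg_and_le hh hN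
  exact hA.mem_of_add_le hm hh hcop hb.1 (by linarith)

end IsSemiModule

lemma maxShift_le_toNat (hh : 0 < h) {L : ℤ} (hL : ∀ x ∈ A, L ≤ x) (a : ℤ) :
    maxShift m h A a ≤ (a + m - L).toNat := by
  refine csSup_le' fun n hn => ?_
  have := hL _ hn
  have : (n : ℤ) ≤ n * h := le_mul_of_one_le_right (by positivity) hh
  omega

end SemiModule

abbrev window (m h : ℤ) : Set ℤ := Icc (-((h - 1) * m)) (h * (h - 1) / 2 + (h - 1) * m)

namespace IsExtSemiModule

variable {m h : ℕ} {A : Set ℤ} {φ : ℤ → WithBot ℕ} {μ : Fin h → ℕ}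

lemma le_of_mem (hp : IsExtSemiModule m h A φ μ) (hh : 0 < h) (hcop : Nat.Coprime m h)
    {a : ℤ} (ha : a ∈ A) : -((h - 1) * m : ℤ) ≤ a :=
  hp.1.le_of_mem (Nat.cast_nonneg m) (by exact_mod_cast hh) (Nat.isCoprime_iff_coprime.mpr hcop)
    hp.2.1 ha

lemma mem_of_le (hp : IsExtSemiModule m h A φ μ) (hh : 0 < h) (hcop : Nat.Coprime m h)
    {x : ℤ} (hx : h * (h - 1) / 2 + (h - 1) * m ≤ x) : x ∈ A :=
  hp.1.mem_of_le (Nat.cast_nonneg m) (by exact_mod_cast hh) (Nat.isCoprime_iff_coprime.mpr hcop)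
    hp.2.1 hx

lemma le_toNat_of_le (hp : IsExtSemiModule m h A φ μ) (hh : 0 < h) (hcop : Nat.Coprime m h)
    {x : ℤ} (hx : x ≤ h * (h - 1) / 2 + (h - 1) * m) :
    φ x ≤ ((h * (h - 1) / 2 + (2 * h - 1) * m : ℤ).toNat : ℕ) := by
  by_cases hxA : x ∈ A
  · refine (hp.2.2.2.2.1 x hxA).trans (WithBot.coe_le_coe.mpr ?_)
    refine (maxShift_le_toNat (by exact_mod_cast hh) (fun a ha => hp.le_of_mem hh hcop ha)
      x).trans (Int.toNat_le_toNat ?_)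
    linarith
  · simp [(hp.2.2.1 x).mpr hxA]

lemma eq_of_eqOn_window {A₁ A₂ : Set ℤ} {φ₁ φ₂ : ℤ → WithBot ℕ} {μ₁ μ₂ : Fin h → ℕ}
    (hp₁ : IsExtSemiModule m h A₁ φ₁ μ₁) (hp₂ : IsExtSemiModule m h A₂ φ₂ μ₂) (hh : 0 < h)
    (hcop : Nat.Coprime m h) (heq : EqOn φ₁ φ₂ (window m h)) : (A₁, φ₁) = (A₂, φ₂) := by
  have hA : A₁ = A₂ := by
    ext x
    rcases lt_or_ge x (-((h - 1) * m)) with hx | hx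
    · exact iff_of_false (fun hx₁ => (hp₁.le_of_mem hh hcop hx₁).not_gt hx)
        (fun hx₂ => (hp₂.le_of_mem hh hcop hx₂).not_gt hx)
    rcases le_or_gt ((h : ℤ) * (h - 1) / 2 + (h - 1) * m) x with hx' | hx'
    · exact iff_of_true (hp₁.mem_of_le hh hcop hx') (hp₂.mem_of_le hh hcop hx')
    · rw [← not_iff_not, ← hp₁.2.2.1, ← hp₂.2.2.1, heq ⟨hx, hx'.le⟩]
  subst hA
  refine congrArg (Prod.mk A₁) (funext fun x => ?_)
  by_cases hxA : x ∈ A₁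
  · rcases le_or_gt ((h : ℤ) * (h - 1) / 2 + (h - 1) * m) x with hx | hx
    · have hcofinal : ∀ b, x ≤ b → b ∈ A₁ := fun b hb => hp₁.mem_of_le hh hcop (hx.trans hb)
      rw [hp₁.2.2.2.2.2.1 x hxA hcofinal, hp₂.2.2.2.2.2.1 x hxA hcofinal]
    · exact heq ⟨hp₁.le_of_mem hh hcop hxA, hx.le⟩
  · rw [(hp₁.2.2.1 x).mpr hxA, (hp₂.2.2.1 x).mpr hxA]

end IsExtSemiModule

theorem finitely_many_ext_semimodules_general (m h : ℕ) (hh : 0 < h)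
    (hcop : Nat.Coprime m h) (μ : Fin h → ℕ) :
    {p : Set ℤ × (ℤ → WithBot ℕ) | IsExtSemiModule m h p.1 p.2 μ}.Finite := by
  refine Set.Finite.of_finite_image (f := fun p (x : window m h) => p.2 x) ?_ ?_
  · refine (Set.Finite.pi fun _ =>
      Set.finite_Iic ((((h : ℤ) * (h - 1) / 2 + (2 * h - 1) * m).toNat : ℕ) : WithBot ℕ)).subset ?_
    rintro _ ⟨p, hp, rfl⟩ x -
    exact hp.le_toNat_of_le hh hcop x.2.2
  · rintro ⟨A₁, φ₁⟩ hp₁ ⟨A₂, φ₂⟩ hp₂ heq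
    exact hp₁.eq_of_eqOn_window hp₂ hh hcop fun x hx => congrFun heq ⟨x, hx⟩

/-- there are only finitely many extended semi-modules for `μ`. -/
theorem finitely_many_ext_semimodules (m h : ℕ) (hm : 0 < m) (hh : 0 < h)
    (hcop : Nat.Coprime m h) (μ : Fin h → ℕ) (hμ : Monotone μ)
    (hsum : psum μ h = m) :
    {p : Set ℤ × (ℤ → WithBot ℕ) | IsExtSemiModule m h p.1 p.2 μ}.Finite :=
  finitely_many_ext_semimodules_general m h hh hcop μ
end

section
/- Let A be a normalized semi-module for coprime m, h of dominant type μ, and (A, φ) the associated cyclic extended semi-module. Then |𝒱(A, φ)| = d(b, μ) = Σ_{i=0}^{h-1} Σ_{j=1}^{i} (m/h − μⱼ) − (h−1)/2. -/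
/-!
The type sequence `b₀ = min B`, `b_{i+1} = b_i + m - μ_i h` runs through `B = A \ (A + h)` and,
`m` being prime to `h`, meets every residue class mod `h` exactly once. Hence
`A = {b_i + l h | i < h, l ≥ 0}` with `φ (b_i + l h) = μ_i + l`, the first entry of a pair in
`𝒱(A, φ)` is some `b_i`, and the pairs whose second entry lies in the class of `b_j` correspond to the
`l < μ_i - μ_j` with `b_i < b_j + l h`. Passing from `(i, j)` to `(i + 1, j + 1)` adds `(μ_i - μ_j) h`
to `b_j - b_i`, so this count is the increase in the number of positive multiples of `h` below
`b_j - b_i`. Summing along diagonals telescopes to `∑_{j < h} ⌊(b_j - b₀) / h⌋`, which is `d(b, μ)`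
because `b_j - b₀ = j m - (μ_0 + ⋯ + μ_{j-1}) h` and the residues of the `b_j - b₀` are `0, …, h - 1`.
-/

open Finset

section SemiModule

variable {h : ℤ} {A : Set ℤ}

theorem add_mul_mem_of_add_mem (hA : ∀ a ∈ A, a + h ∈ A) {a : ℤ} (ha : a ∈ A) (l : ℕ) :
    a + l * h ∈ A := by
  induction l with
  | zero => simpa using ha
  | succ l ih => simpa [add_mul, add_assoc] using hA _ ih

theorem BSet.add_mul_mem_iff (hA : ∀ a ∈ A, a + h ∈ A) {x : ℤ} (hx : x ∈ BSet h A) (t : ℤ) :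
    x + t * h ∈ A ↔ 0 ≤ t := by
  refine ⟨fun hxt => ?_, fun ht => ?_⟩
  · by_contra! ht
    apply hx.2
    have := add_mul_mem_of_add_mem hA hxt (-t - 1).toNat
    rwa [Int.toNat_of_nonneg (by omega), show x + t * h + (-t - 1) * h = x - h by ring] at this
  · lift t to ℕ using ht
    exact add_mul_mem_of_add_mem hA hx.1 t

theorem BSet.eq_of_dvd_sub (hA : ∀ a ∈ A, a + h ∈ A) {x y : ℤ} (hx : x ∈ BSet h A)
    (hy : y ∈ BSet h A) (hxy : h ∣ x - y) : x = y := by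
  obtain ⟨t, ht⟩ := hxy
  have hy_le : 0 ≤ t := (BSet.add_mul_mem_iff hA hy t).1 (by convert hx.1 using 1; linarith)
  have hx_le : 0 ≤ -t := (BSet.add_mul_mem_iff hA hx (-t)).1 (by convert hy.1 using 1; linarith)
  obtain rfl : t = 0 := by omega
  linarith

end SemiModule

/-- The number of `t ≥ 1` with `t * h < d`, for `0 < h`. -/
def multiplesBelow (h d : ℤ) : ℕ := ((d - 1) / h).toNat

section MultiplesBelow

variable {h : ℤ}

theorem multiplesBelow_of_nonpos (hh : 0 < h) {d : ℤ} (hd : d ≤ 0) : multiplesBelow h d = 0 := by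
  rw [multiplesBelow, Int.toNat_eq_zero]
  exact Int.ediv_nonpos_of_nonpos_of_neg (by omega) hh

theorem multiplesBelow_add_mul (hh : 0 < h) (d : ℤ) (δ : ℕ) :
    multiplesBelow h (d + δ * h) = multiplesBelow h d + #{l ∈ range δ | 0 < d + (l : ℕ) * h} := by
  have hfilter : (range δ).filter (fun l : ℕ => 0 < d + l * h) = Ico (-((d - 1) / h)).toNat δ := by
    ext l
    have := Int.le_ediv_iff_mul_le hh (a := -l) (b := d - 1)
    simp only [mem_filter, mem_range, mem_Ico]
    constructor
    · rintro ⟨hl, hpos⟩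
      refine ⟨?_, hl⟩
      have : -(l : ℤ) ≤ (d - 1) / h := this.2 (by linarith)
      omega
    · rintro ⟨hl, hlδ⟩
      refine ⟨hlδ, ?_⟩
      have := this.1 (by omega)
      linarith
  rw [hfilter, Nat.card_Ico, multiplesBelow, multiplesBelow,
    show d + δ * h - 1 = d - 1 + δ * h by ring, Int.add_mul_ediv_right _ _ hh.ne']
  omega

theorem multiplesBelow_eq_ediv (hh : 0 < h) {d : ℤ} (hd : 0 ≤ d) (hdvd : h ∣ d → d = 0) :
    multiplesBelow h d = d / h := by
  rcases eq_or_ne d 0 with rfl | hd0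
  · simp [multiplesBelow_of_nonpos hh le_rfl]
  have hr : 0 < d % h := (Int.emod_pos_of_not_dvd (mt hdvd hd0)).resolve_left hh.ne'
  have hrh : d % h < h := Int.emod_lt_of_pos d hh
  have hq : 0 ≤ d / h := Int.ediv_nonneg hd hh.le
  rw [multiplesBelow, show d - 1 = (d % h - 1) + d / h * h by linarith [Int.emod_add_mul_ediv d h],
    Int.add_mul_ediv_right _ _ hh.ne', Int.ediv_eq_zero_of_lt (by omega) (by omega), zero_add,
    Int.toNat_of_nonneg hq]

end MultiplesBelow

theorem sum_range_sum_range_eq_of_succ_succ {c E : ℕ → ℕ → ℕ} {n : ℕ}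
    (hE : ∀ i ≤ n, E i 0 = 0) (hc : ∀ i < n, ∀ j < i, E (i + 1) (j + 1) = E i j + c i j) :
    ∑ i ∈ range n, ∑ j ∈ range i, c i j = ∑ j ∈ range n, E n j := by
  induction n with
  | zero => simp
  | succ n ih =>
    rw [sum_range_succ, ih (fun i hi => hE i (by omega)) (fun i hi => hc i (by omega)),
      sum_range_succ', hE _ le_rfl, add_zero, ← sum_add_distrib]
    exact sum_congr rfl fun j hj => (hc n (by omega) j (mem_range.1 hj)).symm

def extendByZero {h : ℕ} (μ : Fin h → ℕ) (i : ℕ) : ℕ := if hi : i < h then μ ⟨i, hi⟩ else 0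

theorem Monotone.monotoneOn_extendByZero {h : ℕ} {μ : Fin h → ℕ} (hμ : Monotone μ) :
    MonotoneOn (extendByZero μ) (Set.Iio h) := fun i hi j hj hij => by
  simp only [extendByZero, dif_pos (Set.mem_Iio.1 hi), dif_pos (Set.mem_Iio.1 hj)]
  exact hμ (Fin.mk_le_mk.2 hij)

theorem psum_eq_sum_range {h : ℕ} (μ : Fin h → ℕ) {i : ℕ} (hi : i ≤ h) :
    psum μ i = ∑ k ∈ range i, extendByZero μ k := by
  calc psum μ i = ∑ k ∈ range h, if k < i then extendByZero μ k else 0 := by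
        rw [psum, ← Fin.sum_univ_eq_sum_range]
        simp [extendByZero]
    _ = ∑ k ∈ range i, extendByZero μ k := by
        rw [← sum_filter]
        congr 1
        ext k
        simp only [mem_filter, mem_range]
        omega

/-- The sequence `b` of `HasType`, with `ν` in place of `μ`: maximality of `ν i` says exactly
that `b (i + 1) ∈ BSet h A`. -/
structure IsTypeSequence_s11 (m h : ℕ) (A : Set ℤ) (b : ℕ → ℤ) (ν : ℕ → ℕ) : Prop where
  mem_BSet : ∀ i ≤ h, b i ∈ BSet h A
  zero_le : ∀ x ∈ BSet h A, b 0 ≤ x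
  succ_eq : ∀ i < h, b (i + 1) = b i + m - ν i * h

theorem HasType.exists_isTypeSequence {m h : ℕ} {A : Set ℤ} {μ : Fin h → ℕ}
    (htype : HasType m h A μ) : ∃ b, IsTypeSequence_s11 m h A b (extendByZero μ) := by
  obtain ⟨b, hb0, hmin, hstep⟩ := htype
  refine ⟨b, ⟨fun i hi => ?_, hmin, fun i hi => ?_⟩⟩
  · cases i with
    | zero => exact hb0
    | succ i =>
      obtain ⟨heq, hmem, hnot⟩ := hstep ⟨i, by omega⟩
      exact ⟨hmem, by rw [heq]; convert hnot using 2; ring⟩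
  · simpa [extendByZero, hi] using (hstep ⟨i, hi⟩).1

/-- Index set of `Vset`: `⟨(i, j), l⟩` stands for the pair `(b i, b j + l * h)`. -/
def vTriples (h : ℕ) (b : ℕ → ℤ) (ν : ℕ → ℕ) : Finset ((_ : ℕ × ℕ) × ℕ) :=
  (range h ×ˢ range h).sigma fun p => (range (ν p.1 - ν p.2)).filter fun l => b p.1 < b p.2 + l * h

namespace IsTypeSequence_s11

variable {m h : ℕ} {A : Set ℤ} {b : ℕ → ℤ} {ν : ℕ → ℕ} (hb : IsTypeSequence_s11 m h A b ν)
include hb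

theorem pos : 0 < h := by
  by_contra! h0
  obtain ⟨hA, hnA⟩ := hb.mem_BSet 0 (Nat.zero_le h)
  simp_all

theorem sub_zero_eq {i : ℕ} (hi : i ≤ h) :
    b i - b 0 = i * m - (∑ k ∈ range i, (ν k : ℤ)) * h := by
  induction i with
  | zero => simp
  | succ i ih =>
    rw [hb.succ_eq i hi, sum_range_succ]
    push_cast
    linear_combination ih (by omega)

theorem eq_of_dvd_sub (hcop : Nat.Coprime m h) {i j : ℕ} (hi : i < h) (hj : j < h)
    (hij : (h : ℤ) ∣ b i - b j) : i = j := by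
  have hdvd : (h : ℤ) ∣ ((i : ℤ) - j) * m := by
    have e : b i - b j = ((i : ℤ) - j) * m -
        ((∑ k ∈ range i, (ν k : ℤ)) - ∑ k ∈ range j, (ν k : ℤ)) * h := by
      linear_combination hb.sub_zero_eq hi.le - hb.sub_zero_eq hj.le
    rwa [e, dvd_sub_left ((dvd_refl _).mul_left _)] at hij
  have := Int.eq_zero_of_abs_lt_dvd (hcop.symm.isCoprime.dvd_of_dvd_mul_right hdvd)
    (by rw [abs_lt]; omega)
  omega

theorem last_eq_first (hA : ∀ a ∈ A, a + (h : ℤ) ∈ A) : b h = b 0 :=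
  BSet.eq_of_dvd_sub hA (hb.mem_BSet h le_rfl) (hb.mem_BSet 0 (Nat.zero_le h))
    ⟨m - ∑ k ∈ range h, (ν k : ℤ), by linear_combination hb.sub_zero_eq le_rfl⟩

theorem injOn_residue (hcop : Nat.Coprime m h) :
    Set.InjOn (fun j => ((b j - b 0) % h).toNat) (range h) := by
  intro i hi j hj hij
  have hmod : (b i - b 0) % h = (b j - b 0) % h := by
    have := Int.emod_nonneg (b i - b 0) (Int.natCast_ne_zero.2 hb.pos.ne')
    have := Int.emod_nonneg (b j - b 0) (Int.natCast_ne_zero.2 hb.pos.ne')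
    simp only at hij
    omega
  refine (hb.eq_of_dvd_sub hcop (mem_range.1 hj) (mem_range.1 hi) ?_).symm
  simpa using (Int.ModEq.dvd hmod)

theorem image_residue (hcop : Nat.Coprime m h) :
    (range h).image (fun j => ((b j - b 0) % h).toNat) = range h := by
  refine eq_of_subset_of_card_le (fun r hr => ?_) (card_image_of_injOn (hb.injOn_residue hcop)).ge
  obtain ⟨j, -, rfl⟩ := mem_image.1 hr
  have := Int.emod_lt_of_pos (b j - b 0) (Int.natCast_pos.2 hb.pos)
  exact mem_range.2 (by have := hb.pos; omega)

theorem exists_eq_add_mul (hA : ∀ a ∈ A, a + (h : ℤ) ∈ A) (hcop : Nat.Coprime m h) {a : ℤ}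
    (ha : a ∈ A) : ∃ j < h, ∃ l : ℕ, a = b j + l * h := by
  have hpos : (0 : ℤ) < h := Int.natCast_pos.2 hb.pos
  have hr : ((a - b 0) % h).toNat ∈ range h :=
    mem_range.2 (by have := Int.emod_lt_of_pos (a - b 0) hpos; omega)
  rw [← hb.image_residue hcop] at hr
  obtain ⟨j, hj, hja⟩ := mem_image.1 hr
  have hmod : (b j - b 0) % h = (a - b 0) % h := by
    have := Int.emod_nonneg (b j - b 0) hpos.ne'
    have := Int.emod_nonneg (a - b 0) hpos.ne'
    omega
  obtain ⟨t, ht⟩ := Int.ModEq.dvd hmod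
  have ht0 : 0 ≤ t := (BSet.add_mul_mem_iff hA (hb.mem_BSet j (mem_range.1 hj).le) t).1
    (by convert ha using 1; linarith)
  lift t to ℕ using ht0
  exact ⟨j, mem_range.1 hj, t, by linarith⟩

theorem add_mul_inj (hcop : Nat.Coprime m h) {i j k l : ℕ} (hi : i < h) (hj : j < h)
    (heq : b i + k * h = b j + l * h) : i = j ∧ k = l := by
  obtain rfl : i = j := hb.eq_of_dvd_sub hcop hi hj ⟨l - k, by linear_combination heq⟩
  have : (k : ℤ) = l := mul_right_cancel₀ (Int.natCast_ne_zero.2 hb.pos.ne') (add_left_cancel heq)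
  exact ⟨rfl, by exact_mod_cast this⟩

theorem sum_residue (hcop : Nat.Coprime m h) :
    ∑ j ∈ range h, (b j - b 0) % h = ∑ r ∈ range h, (r : ℤ) := by
  have hnn : ∀ j, 0 ≤ (b j - b 0) % h := fun j =>
    Int.emod_nonneg _ (Int.natCast_ne_zero.2 hb.pos.ne')
  conv_rhs => rw [← hb.image_residue hcop, sum_image (hb.injOn_residue hcop)]
  exact sum_congr rfl fun j _ => (Int.toNat_of_nonneg (hnn j)).symm

theorem maxShift_add_mul (hA : ∀ a ∈ A, a + (h : ℤ) ∈ A) {i : ℕ} (hi : i < h) (l : ℕ) :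
    maxShift m h A (b i + l * h) = ν i + l := by
  have hset : {n : ℕ | b i + l * h + m - n * h ∈ A} = Set.Iic (ν i + l) := by
    ext n
    have key := BSet.add_mul_mem_iff hA (hb.mem_BSet (i + 1) hi) ((ν i : ℤ) + l - n)
    rw [hb.succ_eq i hi] at key
    simp only [Set.mem_ofPred_eq, Set.mem_Iic]
    rw [show b i + l * h + m - n * h = b i + m - ν i * h + ((ν i : ℤ) + l - n) * h by ring, key]
    omega
  rw [maxShift, hset, csSup_Iic]

theorem Vset_eq_image (hA : ∀ a ∈ A, a + (h : ℤ) ∈ A) (hcop : Nat.Coprime m h)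
    {φ : ℤ → WithBot ℕ}
    (hφ : ∀ a : ℤ, (a ∈ A → φ a = (maxShift m h A a : WithBot ℕ)) ∧ (a ∉ A → φ a = ⊥)) :
    Vset h A φ = ((vTriples h b ν).image fun q => (b q.1.1, b q.1.2 + q.2 * h) : Set (ℤ × ℤ)) := by
  have hφb : ∀ i < h, ∀ l : ℕ, φ (b i + l * h) = ((ν i + l : ℕ) : WithBot ℕ) := fun i hi l => by
    rw [(hφ _).1 (add_mul_mem_of_add_mem hA (hb.mem_BSet i hi.le).1 l), hb.maxShift_add_mul hA hi]
  ext ⟨x, y⟩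
  simp only [Vset, vTriples, Set.mem_ofPred_eq, coe_image, Set.mem_image, mem_coe, mem_sigma,
    mem_product, mem_range, mem_filter, Sigma.exists, Prod.exists, Prod.mk.injEq]
  constructor
  · rintro ⟨hx, hy, hxy, hφyx, hφx⟩
    obtain ⟨i, hi, k, rfl⟩ := hb.exists_eq_add_mul hA hcop hx
    obtain ⟨j, hj, l, rfl⟩ := hb.exists_eq_add_mul hA hcop hy
    rw [hφb i hi, hφb j hj] at hφyx
    norm_cast at hφyx
    obtain rfl : k = 0 := by
      by_contra hk
      rw [show b i + k * h - h = b i + (k - 1 : ℕ) * h by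
        push_cast [Nat.one_le_iff_ne_zero.2 hk]; ring, hφb i hi, hφb j hj] at hφx
      norm_cast at hφx
      omega
    exact ⟨i, j, l, ⟨⟨hi, hj⟩, by omega, by simpa using hxy⟩, by simp, rfl⟩
  · rintro ⟨i, j, l, ⟨⟨hi, hj⟩, hl, hlt⟩, rfl, rfl⟩
    have hφi : φ (b i) = ((ν i : ℕ) : WithBot ℕ) := by simpa using hφb i hi 0
    refine ⟨(hb.mem_BSet i hi.le).1, add_mul_mem_of_add_mem hA (hb.mem_BSet j hj.le).1 l, hlt,
      ?_, ?_⟩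
    · rw [hφb j hj, hφi]
      exact_mod_cast (by omega : ν j + l < ν i)
    · rw [(hφ _).2 (hb.mem_BSet i hi.le).2, hφb j hj]
      exact WithBot.bot_lt_coe _

theorem ncard_Vset (hA : ∀ a ∈ A, a + (h : ℤ) ∈ A) (hcop : Nat.Coprime m h)
    {φ : ℤ → WithBot ℕ}
    (hφ : ∀ a : ℤ, (a ∈ A → φ a = (maxShift m h A a : WithBot ℕ)) ∧ (a ∉ A → φ a = ⊥)) :
    (Vset h A φ).ncard =
      ∑ i ∈ range h, ∑ j ∈ range h, #{l ∈ range (ν i - ν j) | b i < b j + (l : ℕ) * h} := by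
  rw [hb.Vset_eq_image hA hcop hφ, Set.ncard_coe_finset, card_image_of_injOn, vTriples,
    card_sigma, sum_product]
  rintro ⟨⟨i, j⟩, l⟩ hq ⟨⟨i', j'⟩, l'⟩ hq' heq
  simp only [vTriples, coe_sigma, Set.mem_sigma_iff, coe_product, Set.mem_prod, coe_range,
    Set.mem_Iio] at hq hq'
  simp only [Prod.mk.injEq] at heq
  obtain ⟨rfl, -⟩ := hb.add_mul_inj hcop (k := 0) (l := 0) hq.1.1 hq'.1.1 (by simpa using heq.1)
  obtain ⟨rfl, rfl⟩ := hb.add_mul_inj hcop hq.1.2 hq'.1.2 heq.2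
  rfl

theorem ncard_Vset_eq_sum_multiplesBelow (hA : ∀ a ∈ A, a + (h : ℤ) ∈ A)
    (hcop : Nat.Coprime m h) (hν : MonotoneOn ν (Set.Iio h)) {φ : ℤ → WithBot ℕ}
    (hφ : ∀ a : ℤ, (a ∈ A → φ a = (maxShift m h A a : WithBot ℕ)) ∧ (a ∉ A → φ a = ⊥)) :
    (Vset h A φ).ncard = ∑ j ∈ range h, multiplesBelow h (b j - b 0) := by
  have hpos : (0 : ℤ) < h := Int.natCast_pos.2 hb.pos
  set c : ℕ → ℕ → ℕ := fun i j => #{l ∈ range (ν i - ν j) | b i < b j + (l : ℕ) * h}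
  have hc_zero : ∀ i < h, ∀ j < h, i ≤ j → c i j = 0 := fun i hi j hj hij => by
    simp [c, Nat.sub_eq_zero_of_le (hν hi hj hij)]
  have hc_step : ∀ i < h, ∀ j < i,
      multiplesBelow h (b (j + 1) - b (i + 1)) = multiplesBelow h (b j - b i) + c i j := by
    intro i hi j hji
    have hδ := hν (hji.trans hi) hi hji.le
    rw [hb.succ_eq i hi, hb.succ_eq j (hji.trans hi),
      show b j + m - ν j * h - (b i + m - ν i * h) = b j - b i + (ν i - ν j : ℕ) * h by
        push_cast [hδ]; ring, multiplesBelow_add_mul hpos]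
    congr 2
    exact filter_congr fun l _ => by constructor <;> intro <;> linarith
  calc (Vset h A φ).ncard = ∑ i ∈ range h, ∑ j ∈ range i, c i j := by
        rw [hb.ncard_Vset hA hcop hφ]
        refine sum_congr rfl fun i hi => (sum_subset (range_subset_range.2 (mem_range.1 hi).le)
          fun j hj hji => hc_zero i (mem_range.1 hi) j (mem_range.1 hj) ?_).symm
        simpa using hji
    _ = ∑ j ∈ range h, multiplesBelow h (b j - b h) :=
        sum_range_sum_range_eq_of_succ_succ (c := c) (E := fun i j => multiplesBelow h (b j - b i))
          (fun i hi => multiplesBelow_of_nonpos hpos (by linarith [hb.zero_le _ (hb.mem_BSet i hi)]))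
          fun i hi j hji => hc_step i hi j hji
    _ = ∑ j ∈ range h, multiplesBelow h (b j - b 0) := by rw [hb.last_eq_first hA]

theorem sum_multiplesBelow_eq (hcop : Nat.Coprime m h) :
    (∑ j ∈ range h, multiplesBelow h (b j - b 0) : ℚ) =
      ∑ i ∈ range h, ((i * m : ℚ) / h - (∑ k ∈ range i, ν k : ℕ)) - (h - 1) / 2 := by
  have hpos : (0 : ℤ) < h := Int.natCast_pos.2 hb.pos
  have hh : (h : ℚ) ≠ 0 := Nat.cast_ne_zero.2 hb.pos.ne'
  have hterm : ∀ j ∈ range h, (multiplesBelow h (b j - b 0) : ℚ) =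
      ((j * m : ℚ) / h - (∑ k ∈ range j, ν k : ℕ)) - ((b j - b 0) % h : ℤ) / h := by
    intro j hj
    have hj := mem_range.1 hj
    have hd : 0 ≤ b j - b 0 := by linarith [hb.zero_le _ (hb.mem_BSet j hj.le)]
    have hdvd : (h : ℤ) ∣ b j - b 0 → b j - b 0 = 0 := fun hdvd => by
      rw [hb.eq_of_dvd_sub hcop hj hb.pos hdvd, sub_self]
    have hdiv : (((b j - b 0) % h : ℤ) : ℚ) + h * ((b j - b 0) / h : ℤ) = j * m -
        (∑ k ∈ range j, ν k : ℕ) * h := by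
      exact_mod_cast (Int.emod_add_mul_ediv (b j - b 0) h).trans (hb.sub_zero_eq hj.le)
    rw [← Int.cast_natCast, multiplesBelow_eq_ediv hpos hd hdvd]
    field_simp
    linear_combination hdiv
  have hgauss : (∑ j ∈ range h, ((b j - b 0) % h : ℤ) : ℚ) = h * (h - 1) / 2 := by
    rw [← Int.cast_sum, hb.sum_residue hcop]
    have := congrArg (Nat.cast : ℕ → ℚ) (sum_range_id_mul_two h)
    push_cast [Nat.cast_sub hb.pos] at this ⊢
    linarith
  rw [sum_congr rfl hterm, sum_sub_distrib, ← sum_div, hgauss]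
  congr 1
  field_simp

end IsTypeSequence_s11

theorem cyclic_V_card_eq_dval_general (m h : ℕ)
    (hcop : Nat.Coprime m h) (μ : Fin h → ℕ) (hμ : Monotone μ)
    (A : Set ℤ) (hA : IsSemiModule m h A)
    (htype : HasType m h A μ)
    (φ : ℤ → WithBot ℕ)
    (hφ : ∀ a : ℤ, (a ∈ A → φ a = (maxShift m h A a : WithBot ℕ)) ∧
      (a ∉ A → φ a = ⊥)) :
    ((Vset h A φ).ncard : ℚ) = dval m h μ := by
  obtain ⟨b, hb⟩ := htype.exists_isTypeSequence
  rw [hb.ncard_Vset_eq_sum_multiplesBelow hA.2.2.2 hcop hμ.monotoneOn_extendByZero hφ, Nat.cast_sum,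
    hb.sum_multiplesBelow_eq hcop, dval]
  congr 1
  exact sum_congr rfl fun i hi => by rw [psum_eq_sum_range μ (mem_range.1 hi).le]

/-- for the cyclic extended semi-module associated to the
normalized semi-module of dominant type `μ`, `|𝒱(A,φ)| = d(b,μ)`. -/
theorem cyclic_V_card_eq_dval (m h : ℕ) (hm : 0 < m) (hh : 0 < h)
    (hcop : Nat.Coprime m h) (μ : Fin h → ℕ) (hμ : Monotone μ)
    (A : Set ℤ) (hA : IsSemiModule m h A) (hnorm : IsNormalized h A)
    (htype : HasType m h A μ)
    (φ : ℤ → WithBot ℕ)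
    (hφ : ∀ a : ℤ, (a ∈ A → φ a = (maxShift m h A a : WithBot ℕ)) ∧
      (a ∉ A → φ a = ⊥)) :
    ((Vset h A φ).ncard : ℚ) = dval m h μ :=
  cyclic_V_card_eq_dval_general m h hcop μ hμ A hA htype φ hφ
end
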